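/- For the degree-12 model, for each divisor D in {L, H} (where H := E + 2L), the map Phi^{-1} ∘ twist_D ∘ Phi on the BPS charge space Q^6 is Q-linear and its matrix equals the inverse transpose (S_D^{-1})^t of the monodromy matrix S_D (equivalently (S_D^t)^{-1}). This verifies Kontsevich's proposed correspondence between the monodromy about the divisor D_D in moduli space and tensoring by the line bundle O_X(D), with period monodromies acting on the charge lattice by inverse transpose. -/

import Mathlib

open Matrix

/-- Topological invariants (Chern data) of a sheaf `V` on the two-parameter
Calabi–Yau `X = P^4_{1,1,2,2,6}[12]`: the rank, `ch1 = c1E·E + c1L·L` in the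
divisor basis `(E, L)`, `ch2 = c2h·h + c2l·l` in the curve basis `(h, l)`,
and `ch3 ∈ ℚ`. -/
structure ChernData where
  r : ℚ
  c1E : ℚ
  c1L : ℚ
  c2h : ℚ
  c2l : ℚ
  c3 : ℚ

/-- Product of two divisor classes (coordinates in the basis `(E, L)`) as a
curve class (coordinates in the basis `(h, l)`), for the degree-12 model:
`E·E = −4h + 2l`, `E·L = 2h`, `L·L = 0`. -/
def divMul12 (d e : ℚ × ℚ) : ℚ × ℚ :=
  (-4 * d.1 * e.1 + 2 * (d.1 * e.2 + d.2 * e.1), 2 * d.1 * e.1)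

/-- Intersection number of a divisor class with a curve class:
`E·h = 1`, `E·l = −2`, `L·h = 0`, `L·l = 1`. -/
def divCurve (d c : ℚ × ℚ) : ℚ := d.1 * c.1 - 2 * d.1 * c.2 + d.2 * c.2

/-- The degree-12 BPS charge dictionary `Φ`, sending
`n = (n6, n4^1, n4^2, n0, n2^1, n2^2)` to the Chern data with `r = n6`,
`ch1 = n4^1·E + n4^2·L`, `ch2 = n2^1·h + n2^2·l`,
`ch3 = −n0 − (1/3)n4^1 − 2n4^2`. -/
def Phi12 (n : Fin 6 → ℚ) : ChernData :=
  ⟨n 0, n 1, n 2, n 4, n 5, -(n 3) - (1/3) * n 1 - 2 * n 2⟩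

/-- Twisting by the line bundle `O_X(D)` (degree-12 intersection products):
`(r, ch1, ch2, ch3) ↦ (r, ch1 + rD, ch2 + ch1·D + (r/2)D²,
ch3 + ch2·D + (1/2)ch1·D² + (r/6)D³)`. -/
def twist12 (D : ℚ × ℚ) (c : ChernData) : ChernData :=
  ⟨c.r, c.c1E + c.r * D.1, c.c1L + c.r * D.2,
   c.c2h + (divMul12 (c.c1E, c.c1L) D).1 + (c.r / 2) * (divMul12 D D).1,
   c.c2l + (divMul12 (c.c1E, c.c1L) D).2 + (c.r / 2) * (divMul12 D D).2,
   c.c3 + divCurve D (c.c2h, c.c2l) + (1/2) * divCurve (c.c1E, c.c1L) (divMul12 D D)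
     + (c.r / 6) * divCurve D (divMul12 D D)⟩

/-- Degree-12 monodromy matrix `S_L`, on the lattice ordered
`(n6, n4^1, n4^2, n0, n2^1, n2^2)`. -/
def SL12 : Matrix (Fin 6) (Fin 6) ℚ :=
  !![1,0,-1,2,0,0; 0,1,0,0,-2,0; 0,0,1,0,0,0;
     0,0,0,1,0,0; 0,0,0,0,1,0; 0,0,0,1,0,1]

/-- Degree-12 monodromy matrix `S_H`. -/
def SH12 : Matrix (Fin 6) (Fin 6) ℚ :=
  !![1,-1,-2,5,2,1; 0,1,0,0,0,-2; 0,0,1,-1,-2,0;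
     0,0,0,1,0,0; 0,0,0,1,1,0; 0,0,0,0,0,1]


lemma cons_val_five {α : Type*} (a : α) (v : Fin 5 → α) :
    Matrix.vecCons a v 5 = v 4 := rfl

lemma SL12_inv : SL12⁻¹ =
    !![1,0,1,-2,0,0; 0,1,0,0,2,0; 0,0,1,0,0,0;
       0,0,0,1,0,0; 0,0,0,0,1,0; 0,0,0,-1,0,1] := by
  apply inv_eq_right_inv
  ext i j
  fin_cases i <;> fin_cases j <;>
    simp [SL12, Matrix.mul_apply, Fin.sum_univ_six, Matrix.one_apply, Fin.ext_iff, cons_val_five, Matrix.vecHead, Matrix.vecTail, Function.comp]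

lemma SH12_inv : SH12⁻¹ =
    !![1,1,2,-5,2,1; 0,1,0,0,0,2; 0,0,1,-1,2,0;
       0,0,0,1,0,0; 0,0,0,-1,1,0; 0,0,0,0,0,1] := by
  apply inv_eq_right_inv
  ext i j
  fin_cases i <;> fin_cases j <;>
    simp [SH12, Matrix.mul_apply, Fin.sum_univ_six, Matrix.one_apply, Fin.ext_iff, cons_val_five, Matrix.vecHead, Matrix.vecTail, Function.comp] <;> norm_num

/-- For the degree-12 model, for each divisor `D ∈ {L, H}`
(where `H = E + 2L`, i.e. `L = (0,1)` and `H = (1,2)` in the basis `(E,L)`),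
the map `Φ⁻¹ ∘ twist_D ∘ Φ` on the BPS charge space `ℚ⁶` is ℚ-linear with
matrix the inverse transpose `(S_D⁻¹)ᵀ` of the monodromy matrix `S_D`:
Kontsevich's correspondence between the monodromy about the divisor `D_D` in
moduli space and tensoring by `O_X(D)`, with period monodromies acting on the
charge lattice by inverse transpose. -/
theorem degree12_monodromy_is_twist :
    Function.Bijective Phi12 ∧
    (∀ n : Fin 6 → ℚ, twist12 (0, 1) (Phi12 n) = Phi12 ((SL12⁻¹)ᵀ.mulVec n)) ∧
    (∀ n : Fin 6 → ℚ, twist12 (1, 2) (Phi12 n) = Phi12 ((SH12⁻¹)ᵀ.mulVec n)) := by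
  refine ⟨?_, ?_, ?_⟩
  · constructor
    · intro a b h
      have h' := h
      simp only [Phi12, ChernData.mk.injEq] at h'
      obtain ⟨h0, h1, h2, h4, h5, h3⟩ := h'
      funext i
      fin_cases i <;> simp_all
    · intro c
      refine ⟨![c.r, c.c1E, c.c1L, -c.c3 - (1/3) * c.c1E - 2 * c.c1L, c.c2h, c.c2l], ?_⟩
      cases c
      simp only [Phi12, Matrix.cons_val_zero, Matrix.cons_val_one, Matrix.head_cons,
        Matrix.cons_val_two, Matrix.cons_val_three, Matrix.cons_val_four, cons_val_five,
        Matrix.tail_cons, ChernData.mk.injEq]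
      and_intros <;> first | trivial | ring
  · intro n
    rw [SL12_inv]
    simp only [twist12, Phi12, divMul12, divCurve, Matrix.mulVec, Matrix.transpose_apply,
      dotProduct, Fin.sum_univ_six, ChernData.mk.injEq]
    simp [cons_val_five, Matrix.vecHead, Matrix.vecTail, Function.comp]
    and_intros <;> first | trivial | ring
  · intro n
    rw [SH12_inv]
    simp only [twist12, Phi12, divMul12, divCurve, Matrix.mulVec, Matrix.transpose_apply,
      dotProduct, Fin.sum_univ_six, ChernData.mk.injEq]
    simp [cons_val_five, Matrix.vecHead, Matrix.vecTail, Function.comp]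
    and_intros <;> first | trivial | ring
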